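/- Let μ be a Borel probability measure on ℝ with m_8(μ) < ∞, m_1(μ) = 0 and m_2(μ) = 1, and let h = c₂(μ) n^{−3/2} and Î_n = {x ∈ ℝ : |x − a_n| ≤ 2/e_n − h}. Then there exist c(μ) > 0 and n₁ = n₁(μ) ∈ ℕ such that for all n ≥ n₁ and all x ∈ Î_n: T_n(x) = a_n + ½( (1+b_n)(x−a_n) + (1−b_n) √((x−a_n)² − 4/e_n²) ) + r_{n5}(x) / √((e_n(x−a_n))² − 4), where |r_{n5}(x)| ≤ c(μ) n^{−3/2} (the square roots being the boundary values of the branch with Im z > 0 ⟹ Im M_n(z) ≥ 0). -/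

import Mathlib

/-
The boundary value `T_n(x)` is the limit of `T_n(x + iε)` as `ε ↓ 0`, so the interior estimate
`|T_n - M_n| ≤ c n^{-3/2} / √|(e_n(z - a_n))² - 4|` passes to the limit once `M_n(x + iε)` is shown
to converge to the explicit expression. With `w = 2(M_n - a_n) - (1 + b_n)(z - a_n)`, the quadratic
equation for `M_n` says that `w²` tends to `-R²`, `R = (1 - b_n)√(4/e_n² - (x - a_n)²) > 0`.
Since `M_n ∈ 𝓕` has positive imaginary part, `Im w > -(1 + b_n)ε`, and the factorisation
`(w - iR)(w + iR) = w² + R²` with `|w + iR| ≥ R/2` forces `w → iR`.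
-/

open MeasureTheory Complex Filter Set
open scoped Topology

noncomputable section

namespace FreeCLT

def mom (μ : Measure ℝ) (k : ℕ) : ℝ := ∫ u, u ^ k ∂μ

def cauchy (μ : Measure ℝ) (z : ℂ) : ℂ := ∫ u, (z - (u : ℂ))⁻¹ ∂μ

def recip (μ : Measure ℝ) (z : ℂ) : ℂ := (cauchy μ z)⁻¹

def MemF (F : ℂ → ℂ) : Prop :=
  ∃ ν : Measure ℝ, IsProbabilityMeasure ν ∧ ∀ z : ℂ, 0 < z.im → F z = recip ν z

def Subord (μ : Measure ℝ) (n : ℕ) (Z : ℂ → ℂ) : Prop :=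
  MemF Z ∧ ∀ z : ℂ, 0 < z.im →
    z = (n : ℂ) * Z z - ((n : ℂ) - 1) * recip μ (Z z)

def IsBoxPow (μ : Measure ℝ) (n : ℕ) (Z : ℂ → ℂ) (ν : Measure ℝ) : Prop :=
  Subord μ n Z ∧ IsProbabilityMeasure ν ∧
    ∀ z : ℂ, 0 < z.im → recip ν z = recip μ (Z z)

def rescale (n : ℕ) (ν : Measure ℝ) : Measure ℝ :=
  ν.map (fun x => x / Real.sqrt n)

def HasDensity (ν : Measure ℝ) (p : ℝ → ℝ) : Prop :=
  Continuous p ∧ (∀ x, 0 ≤ p x) ∧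
    ν = MeasureTheory.volume.withDensity (fun x => ENNReal.ofReal (p x))

def aQ (μ : Measure ℝ) (n : ℕ) : ℝ := mom μ 3 / Real.sqrt n
def bQ (μ : Measure ℝ) (n : ℕ) : ℝ := (mom μ 4 - (mom μ 3) ^ 2 - 1) / n
def dQ (μ : Measure ℝ) (n : ℕ) : ℝ := (mom μ 4 - (mom μ 3) ^ 2) / n
def eQ (μ : Measure ℝ) (n : ℕ) : ℝ := (1 - bQ μ n) / Real.sqrt (1 - dQ μ n)

def pw (x : ℝ) : ℝ := (1 / (2 * Real.pi)) * Real.sqrt (max (4 - x ^ 2) 0)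

def truncSet (n : ℕ) : Set ℝ := {u : ℝ | |u| ≤ Real.sqrt ((n : ℝ) - 1) / Real.pi}

def Tfun (W : ℕ → ℂ → ℂ) (n : ℕ) (z : ℂ) : ℂ :=
  W n ((Real.sqrt (n : ℝ) : ℂ) * z) / (Real.sqrt (n : ℝ) : ℂ)

theorem integrable_inv_sub_ofReal (ν : Measure ℝ) [IsFiniteMeasure ν] {z : ℂ} (hz : 0 < z.im) :
    Integrable (fun u : ℝ => (z - u)⁻¹) ν := by
  refine (integrable_const z.im⁻¹).mono' (by fun_prop) (.of_forall fun u => ?_)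
  rw [norm_inv]
  refine inv_anti₀ hz ((le_abs_self _).trans ?_)
  simpa using Complex.abs_im_le_norm (z - u)

theorem im_inv_sub_ofReal_neg {z : ℂ} (hz : 0 < z.im) (u : ℝ) : ((z - u)⁻¹).im < 0 := by
  have him : 0 < (z - u).im := by simpa using hz
  rw [Complex.inv_im, neg_div, neg_lt_zero]
  exact div_pos him (Complex.normSq_pos.2 fun h => by simp [h] at him)

theorem cauchy_im_neg (ν : Measure ℝ) [IsFiniteMeasure ν] [NeZero ν] {z : ℂ} (hz : 0 < z.im) :
    (cauchy ν z).im < 0 := by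
  have hint := integrable_inv_sub_ofReal ν hz
  have hcauchy_im : (cauchy ν z).im = ∫ u, ((z - u)⁻¹).im ∂ν := (integral_im hint).symm
  rw [hcauchy_im, ← neg_pos, ← integral_neg,
    integral_pos_iff_support_of_nonneg (fun u => (neg_pos.2 (im_inv_sub_ofReal_neg hz u)).le)
      hint.im.neg,
    Function.support_eq_univ fun u => (neg_pos.2 (im_inv_sub_ofReal_neg hz u)).ne']
  exact Measure.measure_univ_pos.2 (NeZero.ne ν)

theorem recip_im_pos (ν : Measure ℝ) [IsFiniteMeasure ν] [NeZero ν] {z : ℂ} (hz : 0 < z.im) :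
    0 < (recip ν z).im := by
  have hc := cauchy_im_neg ν hz
  rw [recip, Complex.inv_im]
  exact div_pos (neg_pos.2 hc) (Complex.normSq_pos.2 fun h => by simp [h] at hc)

theorem MemF.im_pos {F : ℂ → ℂ} (hF : MemF F) {z : ℂ} (hz : 0 < z.im) : 0 < (F z).im := by
  obtain ⟨ν, _, hν⟩ := hF
  exact hν z hz ▸ recip_im_pos ν hz

theorem norm_sub_I_mul_le {w : ℂ} {R : ℝ} (hR : 0 < R) (hw : -(R / 2) ≤ w.im) :
    ‖w - I * R‖ ≤ 2 * ‖w ^ 2 + (R : ℂ) ^ 2‖ / R := by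
  have hfac : (w - I * R) * (w + I * R) = w ^ 2 + (R : ℂ) ^ 2 := by
    linear_combination (-(R : ℂ) ^ 2) * I_sq
  have hplus_im : R / 2 ≤ (w + I * R).im := by
    simp only [add_im, mul_im, I_re, ofReal_im, mul_zero, I_im, ofReal_re, one_mul, zero_add]
    linarith
  have hplus : R / 2 ≤ ‖w + I * R‖ := hplus_im.trans ((le_abs_self _).trans (abs_im_le_norm _))
  rw [le_div_iff₀ hR, ← hfac, norm_mul]
  nlinarith [norm_nonneg (w - I * R)]

theorem tendsto_I_mul_of_tendsto_sq {α : Type*} {l : Filter α} {w : α → ℂ} {R : ℝ} (hR : 0 < R)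
    (hsq : Tendsto (fun t => w t ^ 2) l (𝓝 (-(R : ℂ) ^ 2)))
    (him : ∀ᶠ t in l, -(R / 2) ≤ (w t).im) :
    Tendsto w l (𝓝 (I * R)) := by
  rw [tendsto_iff_norm_sub_tendsto_zero]
  have hbound : Tendsto (fun t => 2 * ‖w t ^ 2 + (R : ℂ) ^ 2‖ / R) l (𝓝 0) := by
    convert ((hsq.add_const ((R : ℂ) ^ 2)).norm.const_mul 2).div_const R
    simp
  exact squeeze_zero' (.of_forall fun _ => norm_nonneg _)
    (him.mono fun t ht => norm_sub_I_mul_le hR ht) hbound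

theorem tendsto_ofReal_add_mul_I_nhdsGT (x : ℝ) :
    Tendsto (fun ε : ℝ => (x : ℂ) + ε * I) (𝓝[>] 0) (𝓝[{z : ℂ | 0 < z.im}] x) := by
  refine tendsto_nhdsWithin_iff.2
    ⟨?_, eventually_nhdsWithin_of_forall fun ε hε => by simpa using hε⟩
  have : Continuous fun ε : ℝ => (x : ℂ) + ε * I := by fun_prop
  simpa using this.tendsto' 0 _ (by simp) |>.mono_left nhdsWithin_le_nhds

theorem tendsto_of_sq_eq_of_im_pos {M : ℂ → ℂ} {a b d x R : ℝ}
    (him : ∀ z : ℂ, 0 < z.im → 0 < (M z).im)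
    (heq : ∀ z : ℂ, 0 < z.im →
      (2 * (M z - a) - (1 + b) * (z - a)) ^ 2 = (1 - b) ^ 2 * (z - a) ^ 2 - 4 * (1 - d))
    (hR : 0 < R) (hR2 : R ^ 2 = 4 * (1 - d) - (1 - b) ^ 2 * (x - a) ^ 2) :
    Tendsto (fun ε : ℝ => M (x + ε * I)) (𝓝[>] 0)
      (𝓝 (a + 1 / 2 * ((1 + b) * (x - a) + I * R))) := by
  set p : ℝ → ℂ := fun ε => x + ε * I
  have hp : Tendsto p (𝓝[>] 0) (𝓝 x) :=
    (tendsto_ofReal_add_mul_I_nhdsGT x).mono_right nhdsWithin_le_nhds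
  have hp_im : ∀ ε, (p ε).im = ε := by simp [p]
  -- `w ε` is a square root of the discriminant at `p ε`; `Im M > 0` rules out the root `-I * R`.
  set w : ℝ → ℂ := fun ε => 2 * (M (p ε) - a) - (1 + b) * (p ε - a)
  have hw : Tendsto w (𝓝[>] 0) (𝓝 (I * R)) := by
    refine tendsto_I_mul_of_tendsto_sq hR ?_ ?_
    · have hR2' : -(R : ℂ) ^ 2 = (1 - b) ^ 2 * (x - a) ^ 2 - 4 * (1 - d) := by
        have hR2c := congrArg (fun t : ℝ => (t : ℂ)) hR2
        push_cast at hR2c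
        linear_combination -hR2c
      rw [hR2']
      refine (((hp.sub_const _).pow 2).const_mul _ |>.sub_const _).congr' ?_
      exact eventually_nhdsWithin_of_forall fun ε hε => (heq _ (by rw [hp_im]; exact hε)).symm
    · have hsmall : ∀ᶠ ε in 𝓝[>] (0 : ℝ), (1 + b) * ε < R / 2 := by
        refine Tendsto.eventually_lt_const (half_pos hR) ?_
        simpa using ((continuous_const_mul (1 + b)).tendsto' 0 0 (by simp)).mono_left
          nhdsWithin_le_nhds
      filter_upwards [hsmall, self_mem_nhdsWithin] with ε hε hpos
      have hM_im := him (p ε) (by rw [hp_im]; exact hpos)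
      have hw_im : (w ε).im = 2 * (M (p ε)).im - (1 + b) * ε := by simp [w, p]
      linarith
  have hM : (fun ε : ℝ => M (x + ε * I)) = fun ε => a + 1 / 2 * (w ε + (1 + b) * (p ε - a)) := by
    funext ε; simp only [w]; ring
  rw [hM]
  convert (((hw.add ((hp.sub_const _).const_mul _)).const_mul _).const_add _) using 3
  ring

theorem norm_sub_le_of_tendsto_vertical {T M : ℂ → ℂ} {β : ℂ → ℝ} {x : ℝ} {L : ℂ}
    (hT : ContinuousWithinAt T {z | 0 < z.im} x)
    (hM : Tendsto (fun ε : ℝ => M (x + ε * I)) (𝓝[>] (0 : ℝ)) (𝓝 L)) (hβ : ContinuousAt β x)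
    (hle : ∀ᶠ ε : ℝ in 𝓝[>] 0, ‖T (x + ε * I) - M (x + ε * I)‖ ≤ β (x + ε * I)) :
    ‖T x - L‖ ≤ β x :=
  have hp := tendsto_ofReal_add_mul_I_nhdsGT x
  le_of_tendsto_of_tendsto (((hT.tendsto.comp hp).sub hM).norm)
    (hβ.tendsto.comp (hp.mono_right nhdsWithin_le_nhds)) hle

theorem tendsto_bQ (μ : Measure ℝ) : Tendsto (bQ μ) atTop (𝓝 0) :=
  tendsto_const_div_atTop_nhds_zero_nat _

theorem tendsto_dQ (μ : Measure ℝ) : Tendsto (dQ μ) atTop (𝓝 0) :=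
  tendsto_const_div_atTop_nhds_zero_nat _

theorem eQ_pos {μ : Measure ℝ} {n : ℕ} (hb : bQ μ n < 1) (hd : dQ μ n < 1) : 0 < eQ μ n :=
  div_pos (sub_pos.2 hb) (Real.sqrt_pos.2 (sub_pos.2 hd))

theorem one_sub_bQ_sq {μ : Measure ℝ} {n : ℕ} (hd : dQ μ n < 1) :
    (1 - bQ μ n) ^ 2 = eQ μ n ^ 2 * (1 - dQ μ n) := by
  have hd' : 1 - dQ μ n ≠ 0 := (sub_pos.2 hd).ne'
  rw [eQ, div_pow, Real.sq_sqrt (sub_pos.2 hd).le]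
  field_simp

theorem sq_mul_lt_four_of_abs_lt {e y : ℝ} (he : 0 < e) (hy : |y| < 2 / e) :
    (e * y) ^ 2 < 4 := by
  have : |e * y| < 2 := by rw [abs_mul, abs_of_pos he]; exact (lt_div_iff₀' he).1 hy
  nlinarith [sq_abs (e * y), abs_nonneg (e * y)]

theorem sq_lt_four_div_sq_of_abs_lt {e y : ℝ} (he : 0 < e) (hy : |y| < 2 / e) :
    y ^ 2 < 4 / e ^ 2 := by
  rw [lt_div_iff₀ (by positivity), mul_comm, ← mul_pow]
  exact sq_mul_lt_four_of_abs_lt he hy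

theorem one_sub_bQ_mul_sqrt_pos {μ : Measure ℝ} {n : ℕ} {y : ℝ} (hb : bQ μ n < 1)
    (hy : y ^ 2 < 4 / eQ μ n ^ 2) : 0 < (1 - bQ μ n) * Real.sqrt (4 / eQ μ n ^ 2 - y ^ 2) :=
  mul_pos (sub_pos.2 hb) (Real.sqrt_pos.2 (sub_pos.2 hy))

theorem sq_one_sub_bQ_mul_sqrt {μ : Measure ℝ} {n : ℕ} {y : ℝ} (hb : bQ μ n < 1)
    (hd : dQ μ n < 1) (hy : y ^ 2 ≤ 4 / eQ μ n ^ 2) :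
    ((1 - bQ μ n) * Real.sqrt (4 / eQ μ n ^ 2 - y ^ 2)) ^ 2
      = 4 * (1 - dQ μ n) - (1 - bQ μ n) ^ 2 * y ^ 2 := by
  have he : eQ μ n ≠ 0 := (eQ_pos hb hd).ne'
  rw [mul_pow, Real.sq_sqrt (sub_nonneg.2 hy), one_sub_bQ_sq hd]
  field_simp

theorem norm_mul_sub_sq_sub_four {e a : ℝ} {z : ℝ} (h : (e * (z - a)) ^ 2 ≤ 4) :
    ‖((e : ℂ) * (z - a)) ^ 2 - 4‖ = 4 - (e * (z - a)) ^ 2 := by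
  have hcast : ((e : ℂ) * (z - a)) ^ 2 - 4 = (((e * (z - a)) ^ 2 - 4 : ℝ) : ℂ) := by push_cast; ring
  rw [hcast, Complex.norm_real, Real.norm_eq_abs, abs_of_nonpos (sub_nonpos.2 h), neg_sub]

theorem continuousAt_div_mul_sqrt_norm {c N e a x : ℝ} (hN : 0 < N) (hx : (e * (x - a)) ^ 2 < 4) :
    ContinuousAt (fun z : ℂ => c / (N * Real.sqrt ‖((e : ℂ) * (z - a)) ^ 2 - 4‖)) x := by
  refine continuousAt_const.div (by fun_prop) (mul_pos hN ?_).ne'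
  rw [norm_mul_sub_sq_sub_four hx.le]
  exact Real.sqrt_pos.2 (sub_pos.2 hx)

theorem stmt_18_general
    (μ : Measure ℝ)
    (W : ℕ → ℂ → ℂ)
    (M : ℕ → ℂ → ℂ)
    (hMF : ∀ᶠ n in atTop, MemF (M n))
    (hMeq : ∀ᶠ n in atTop, ∀ z : ℂ, 0 < z.im →
      (2 * (M n z - (aQ μ n : ℂ)) - (1 + (bQ μ n : ℂ)) * (z - (aQ μ n : ℂ))) ^ 2
        = (1 - (bQ μ n : ℂ)) ^ 2 * (z - (aQ μ n : ℂ)) ^ 2 - 4 * (1 - (dQ μ n : ℂ)))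
    (c₂ : ℝ) (hc₂ : 0 < c₂)
    (hexp : ∃ c' : ℝ, 0 < c' ∧ ∀ᶠ n in atTop, ∀ z : ℂ,
      0 < z.im → z.im ≤ 3 → |z.re - aQ μ n| ≤ 2 / eQ μ n - c₂ * (n : ℝ) ^ (-(3 / 2) : ℝ) →
      ‖Tfun W n z - M n z‖
        ≤ c' / ((n : ℝ) ^ ((3 : ℝ) / 2) *
            Real.sqrt ‖((eQ μ n : ℂ) * (z - (aQ μ n : ℂ))) ^ 2 - 4‖))
    (Tb : ℕ → ℂ → ℂ)
    (hTb : ∀ᶠ n in atTop, ContinuousOn (Tb n) {z : ℂ | 0 ≤ z.im} ∧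
      ∀ z : ℂ, 0 < z.im → Tb n z = Tfun W n z) :
    ∃ c : ℝ, 0 < c ∧ ∃ n₁ : ℕ, ∀ n : ℕ, n₁ ≤ n → ∀ x : ℝ,
      |x - aQ μ n| ≤ 2 / eQ μ n - c₂ * (n : ℝ) ^ (-(3 / 2) : ℝ) →
      ‖Tb n (x : ℂ)
          - ((aQ μ n : ℂ) + (1 / 2) *
              ((1 + (bQ μ n : ℂ)) * ((x : ℂ) - (aQ μ n : ℂ))
                + (1 - (bQ μ n : ℂ)) * Complex.I *
                  ((Real.sqrt (4 / eQ μ n ^ 2 - (x - aQ μ n) ^ 2) : ℝ) : ℂ)))‖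
        ≤ c * (n : ℝ) ^ (-(3 / 2) : ℝ) /
            Real.sqrt (4 - (eQ μ n * (x - aQ μ n)) ^ 2) := by
  obtain ⟨c', hc', hexp⟩ := hexp
  obtain ⟨n₁, hn₁⟩ := eventually_atTop.1 <| hMF.and <| hMeq.and <| hexp.and <| hTb.and <|
    ((tendsto_bQ μ).eventually_lt_const one_pos).and <|
    ((tendsto_dQ μ).eventually_lt_const one_pos).and (eventually_gt_atTop 0)
  refine ⟨c', hc', n₁, fun n hn x hx => ?_⟩
  obtain ⟨hMF, hMeq, hexp, ⟨hTb_cont, hTb_eq⟩, hb, hd, hn⟩ := hn₁ n hn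
  set a := aQ μ n
  set e := eQ μ n
  have he : 0 < e := eQ_pos hb hd
  have hxa : |x - a| < 2 / e := hx.trans_lt (sub_lt_self _ (by positivity))
  have hxa_sq := sq_lt_four_div_sq_of_abs_lt he hxa
  have hlim := tendsto_of_sq_eq_of_im_pos (fun z hz => hMF.im_pos hz) hMeq
    (one_sub_bQ_mul_sqrt_pos hb hxa_sq) (sq_one_sub_bQ_mul_sqrt hb hd hxa_sq.le)
  have hβ := continuousAt_div_mul_sqrt_norm (c := c')
    (by positivity : (0 : ℝ) < (n : ℝ) ^ ((3 : ℝ) / 2)) (sq_mul_lt_four_of_abs_lt he hxa)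
  have hle : ∀ᶠ ε : ℝ in 𝓝[>] 0, ‖Tb n (x + ε * I) - M n (x + ε * I)‖ ≤
      c' / ((n : ℝ) ^ ((3 : ℝ) / 2) * Real.sqrt ‖((e : ℂ) * (x + ε * I - (a : ℂ))) ^ 2 - 4‖) := by
    filter_upwards [Ioo_mem_nhdsGT (show (0 : ℝ) < 3 by norm_num)] with ε ⟨hε, hε3⟩
    have hz : 0 < ((x : ℂ) + ε * I).im := by simpa using hε
    rw [hTb_eq _ hz]
    exact hexp _ hz (by simpa using hε3.le) (by simpa using hx)
  have key := norm_sub_le_of_tendsto_vertical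
    ((hTb_cont x (by simp)).mono fun z (hz : 0 < z.im) => hz.le) hlim hβ hle
  rw [norm_mul_sub_sq_sub_four (sq_mul_lt_four_of_abs_lt he hxa).le] at key
  rw [Real.rpow_neg (Nat.cast_nonneg n), ← div_eq_mul_inv, div_div]
  convert key using 5
  push_cast
  ring

theorem stmt_18
    (μ : Measure ℝ) [IsProbabilityMeasure μ]
    (h8 : Integrable (fun u => u ^ 8) μ)
    (h1 : mom μ 1 = 0) (h2 : mom μ 2 = 1)
    (τ : Measure ℝ) [IsProbabilityMeasure τ]
    (hτ : ∀ z : ℂ, 0 < z.im → recip μ z = z + ∫ u, ((u : ℂ) - z)⁻¹ ∂τ)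
    (μs : ℕ → Measure ℝ) (hμsP : ∀ n : ℕ, IsProbabilityMeasure (μs n))
    (hμs : ∀ n : ℕ, ∀ z : ℂ, 0 < z.im →
      recip (μs n) z = z + ∫ u in truncSet n, ((u : ℂ) - z)⁻¹ ∂τ)
    (W : ℕ → ℂ → ℂ) (νs : ℕ → Measure ℝ)
    (hboxW : ∀ n : ℕ, 1 ≤ n → IsBoxPow (μs n) n (W n) (νs n))
    (M : ℕ → ℂ → ℂ)
    (hMF : ∀ᶠ n in atTop, MemF (M n))
    (hMeq : ∀ᶠ n in atTop, ∀ z : ℂ, 0 < z.im →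
      (2 * (M n z - (aQ μ n : ℂ)) - (1 + (bQ μ n : ℂ)) * (z - (aQ μ n : ℂ))) ^ 2
        = (1 - (bQ μ n : ℂ)) ^ 2 * (z - (aQ μ n : ℂ)) ^ 2 - 4 * (1 - (dQ μ n : ℂ)))
    (c₂ : ℝ) (hc₂ : 0 < c₂)
    (hexp : ∃ c' : ℝ, 0 < c' ∧ ∀ᶠ n in atTop, ∀ z : ℂ,
      0 < z.im → z.im ≤ 3 → |z.re - aQ μ n| ≤ 2 / eQ μ n - c₂ * (n : ℝ) ^ (-(3 / 2) : ℝ) →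
      ‖Tfun W n z - M n z‖
        ≤ c' / ((n : ℝ) ^ ((3 : ℝ) / 2) *
            Real.sqrt ‖((eQ μ n : ℂ) * (z - (aQ μ n : ℂ))) ^ 2 - 4‖))
    (Tb : ℕ → ℂ → ℂ)
    (hTb : ∀ᶠ n in atTop, ContinuousOn (Tb n) {z : ℂ | 0 ≤ z.im} ∧
      ∀ z : ℂ, 0 < z.im → Tb n z = Tfun W n z) :
    ∃ c : ℝ, 0 < c ∧ ∃ n₁ : ℕ, ∀ n : ℕ, n₁ ≤ n → ∀ x : ℝ,
      |x - aQ μ n| ≤ 2 / eQ μ n - c₂ * (n : ℝ) ^ (-(3 / 2) : ℝ) →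
      ‖Tb n (x : ℂ)
          - ((aQ μ n : ℂ) + (1 / 2) *
              ((1 + (bQ μ n : ℂ)) * ((x : ℂ) - (aQ μ n : ℂ))
                + (1 - (bQ μ n : ℂ)) * Complex.I *
                  ((Real.sqrt (4 / eQ μ n ^ 2 - (x - aQ μ n) ^ 2) : ℝ) : ℂ)))‖
        ≤ c * (n : ℝ) ^ (-(3 / 2) : ℝ) /
            Real.sqrt (4 - (eQ μ n * (x - aQ μ n)) ^ 2) :=
  stmt_18_general μ W M hMF hMeq c₂ hc₂ hexp Tb hTb

end FreeCLT
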